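/- Let T be a positive integer and Σ₀ ∈ ℝ^{T×T} a symmetric positive definite matrix with eigenvalues λ_1, ..., λ_T (listed with multiplicity). Define G² = (𝟏ᵀ Σ₀⁻¹ 𝟏)(𝟏ᵀ Σ₀ 𝟏) / T². Then there exist nonnegative weights {w_{ij}}_{i,j=1}^{T} such that G² = 1 + Σ_{i,j=1}^{T} w_{ij} (λ_i - λ_j)². Explicitly, if Σ₀ = Uᵀ A U with U orthogonal, A diagonal with A_{ii} = λ_i, and u = U𝟏, then one may take w_{ij} = (u_i u_j)² / (2 T² λ_i λ_j). -/

import Mathlib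

/-!
Diagonalizing `Σ₀ = Uᵀ diag(λ) U` turns both quadratic forms into weighted sums:
`𝟏ᵀΣ₀^{±1}𝟏 = ∑ λᵢ^{±1} uᵢ²` with `u = U𝟏` and `∑ uᵢ² = |𝟏|² = T`. With
`aᵢ = uᵢ²`, symmetrizing the double sum `(∑ aᵢ/λᵢ)(∑ λⱼaⱼ) = ∑ᵢⱼ aᵢaⱼ λⱼ/λᵢ` and using
`(λⱼ/λᵢ + λᵢ/λⱼ)/2 = 1 + (λᵢ - λⱼ)²/(2λᵢλⱼ)` gives a Lagrange-type identity
`(∑ aᵢ/λᵢ)(∑ λⱼaⱼ) = (∑ aᵢ)² + ∑ᵢⱼ aᵢaⱼ(λᵢ - λⱼ)²/(2λᵢλⱼ)`; dividing by `T²` is the claim.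
-/

open Matrix

variable {n : Type*} [Fintype n]

theorem Finset.sum_div_mul_sum_mul_eq_sq_add {K : Type*} [Field K] [NeZero (2 : K)]
    (a lam : n → K) (hlam : ∀ i, lam i ≠ 0) :
    (∑ i, a i / lam i) * (∑ j, lam j * a j)
      = (∑ i, a i) ^ 2 + ∑ i, ∑ j, a i * a j / (2 * lam i * lam j) * (lam i - lam j) ^ 2 := by
  have hterm : ∀ i j, a i * a j / (2 * lam i * lam j) * (lam i - lam j) ^ 2
      = (a i / lam i * (lam j * a j) + a j / lam j * (lam i * a i)) / 2 - a i * a j :=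
    fun i j => by
      field_simp [hlam i, hlam j]
      ring
  simp only [hterm, Finset.sum_sub_distrib, ← Finset.sum_div, Finset.sum_add_distrib]
  rw [Finset.sum_comm (f := fun i j => a j / lam j * (lam i * a i)), sq, Finset.sum_mul_sum,
    Finset.sum_mul_sum, add_self_div_two]
  ring

variable [DecidableEq n]

theorem Matrix.dotProduct_transpose_mul_diagonal_mul_mulVec {R : Type*} [CommSemiring R]
    (U : Matrix n n R) (d x : n → R) :
    x ⬝ᵥ (Uᵀ * diagonal d * U) *ᵥ x = ∑ i, d i * (U *ᵥ x) i ^ 2 := by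
  rw [← mulVec_mulVec, ← mulVec_mulVec, dotProduct_mulVec, vecMul_transpose]
  simp only [dotProduct, mulVec_diagonal]
  exact Finset.sum_congr rfl fun i _ => by ring

theorem Matrix.sum_mulVec_sq_of_transpose_mul_self {R : Type*} [CommSemiring R]
    {U : Matrix n n R} (hU : Uᵀ * U = 1) (x : n → R) :
    ∑ i, (U *ᵥ x) i ^ 2 = x ⬝ᵥ x := by
  simpa [hU] using (dotProduct_transpose_mul_diagonal_mul_mulVec U 1 x).symm

theorem Matrix.inv_transpose_mul_diagonal_mul {K : Type*} [Field K] {U : Matrix n n K}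
    (hU : Uᵀ * U = 1) (d : n → K) (hd : ∀ i, d i ≠ 0) :
    (Uᵀ * diagonal d * U)⁻¹ = Uᵀ * diagonal d⁻¹ * U := by
  refine inv_eq_right_inv ?_
  have hUUt : U * Uᵀ = 1 := mul_eq_one_comm.mp hU
  calc Uᵀ * diagonal d * U * (Uᵀ * diagonal d⁻¹ * U)
      = Uᵀ * (diagonal d * (U * Uᵀ) * diagonal d⁻¹) * U := by simp only [Matrix.mul_assoc]
    _ = 1 := by
      rw [hUUt, Matrix.mul_one, diagonal_mul_diagonal]
      simp [hd, hU]

theorem Matrix.pos_of_posDef_transpose_mul_diagonal_mul {U : Matrix n n ℝ} (hU : Uᵀ * U = 1)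
    {d : n → ℝ} (h : (Uᵀ * diagonal d * U).PosDef) (i : n) : 0 < d i := by
  have hUnit : IsUnit U := .of_mul_eq_one_right _ hU
  rw [← conjTranspose_eq_transpose_of_trivial, ← star_eq_conjTranspose,
    IsUnit.posDef_star_left_conjugate_iff hUnit, posDef_diagonal_iff] at h
  exact h i

/-- the asymptotic power gain `G² = (𝟏ᵀΣ₀⁻¹𝟏)(𝟏ᵀΣ₀𝟏)/T²` satisfies
`G² = 1 + ∑_{i,j} w_{ij}(λ_i - λ_j)²` for nonnegative weights `w_{ij}`, where `λ_i` are the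
eigenvalues of `Σ₀` (listed with multiplicity via an orthogonal diagonalization
`Σ₀ = Uᵀ A U`), and explicitly `w_{ij} = (u_i u_j)²/(2T²λ_iλ_j)` with `u = U𝟏`. -/
theorem asymptotic_power_gain_eigenvalue_formula
    (T : ℕ) (hT : 0 < T) (S₀ : Matrix (Fin T) (Fin T) ℝ) (hS₀ : S₀.PosDef)
    (lam : Fin T → ℝ) (U : Matrix (Fin T) (Fin T) ℝ)
    (hU : Uᵀ * U = 1) (hdecomp : S₀ = Uᵀ * Matrix.diagonal lam * U) :
    let one : Fin T → ℝ := fun _ => 1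
    let G2 : ℝ := ((one ⬝ᵥ S₀⁻¹ *ᵥ one) * (one ⬝ᵥ S₀ *ᵥ one)) / (T : ℝ) ^ 2
    let u : Fin T → ℝ := U *ᵥ one
    let w : Fin T → Fin T → ℝ := fun i j => (u i * u j) ^ 2 / (2 * (T : ℝ) ^ 2 * lam i * lam j)
    (∀ i j, 0 ≤ w i j) ∧ G2 = 1 + ∑ i, ∑ j, w i j * (lam i - lam j) ^ 2 := by
  intro one G2 u w
  subst hdecomp
  have hlam := pos_of_posDef_transpose_mul_diagonal_mul hU hS₀
  refine ⟨fun i j => by have := hlam i; have := hlam j; positivity, ?_⟩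
  have hsum : ∑ i, u i ^ 2 = T := by
    simp [u, sum_mulVec_sq_of_transpose_mul_self hU, one, dotProduct]
  have hT' : (T : ℝ) ≠ 0 := by positivity
  simp only [G2, w, inv_transpose_mul_diagonal_mul hU lam fun i => (hlam i).ne',
    dotProduct_transpose_mul_diagonal_mul_mulVec, Pi.inv_apply, ← div_eq_inv_mul]
  rw [Finset.sum_div_mul_sum_mul_eq_sq_add _ _ fun i => (hlam i).ne', hsum, add_div,
    div_self (pow_ne_zero 2 hT'), Finset.sum_div]
  refine congrArg _ (Finset.sum_congr rfl fun i _ => ?_)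
  rw [Finset.sum_div]
  refine Finset.sum_congr rfl fun j _ => ?_
  field_simp
  ring
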